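/- In the read-write model, suppose C is a configuration with enabled steps e1 of process p1 and e2 of process p2, where C →e1 C1 and C →e2 C2, C1 is 0-valent and C2 is 1-valent. If e1 and e2 are both read steps, or access different registers, then the configurations C1' (obtained by applying e2 after C1) and C2' (obtained by applying e1 after C2) assign the same local state to p1 and the same register contents, which contradicts C1' being 0-valent and C2' being 1-valent under the assumption that valency is determined by p1's solo run from states indistinguishable to p1. -/

import Mathlib

inductive RWAction | R | W
deriving DecidableEq

structure MemStep (Proc Reg : Type*) where
  p : Proc
  m : Reg
  act : RWAction

def applyStep {Proc Reg LState Val : Type*} [DecidableEq Proc] [DecidableEq Reg]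
    (readUpd : Proc → LState → Val → LState)
    (writeVal : Proc → LState → Val) (writeUpd : Proc → LState → LState)
    (e : MemStep Proc Reg) (C : (Proc → LState) × (Reg → Val)) :
    (Proc → LState) × (Reg → Val) :=
  match e.act with
  | .R => (Function.update C.1 e.p (readUpd e.p (C.1 e.p) (C.2 e.m)), C.2)
  | .W => (Function.update C.1 e.p (writeUpd e.p (C.1 e.p)),
           Function.update C.2 e.m (writeVal e.p (C.1 e.p)))

section
variable {Proc Reg LState Val : Type*} [DecidableEq Proc] [DecidableEq Reg]
  (readUpd : Proc → LState → Val → LState)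
  (writeVal : Proc → LState → Val) (writeUpd : Proc → LState → LState)

-- Neither step writes what the other reads, and they update the local states of different processes.
theorem applyStep_comm {e1 e2 : MemStep Proc Reg} (hp : e1.p ≠ e2.p)
    (hcase : (e1.act = .R ∧ e2.act = .R) ∨ e1.m ≠ e2.m)
    (C : (Proc → LState) × (Reg → Val)) :
    applyStep readUpd writeVal writeUpd e2 (applyStep readUpd writeVal writeUpd e1 C) =
      applyStep readUpd writeVal writeUpd e1 (applyStep readUpd writeVal writeUpd e2 C) := by
  obtain ⟨p1, m1, a1⟩ := e1
  obtain ⟨p2, m2, a2⟩ := e2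
  rcases hcase with ⟨rfl, rfl⟩ | hm
  · simp [applyStep, Function.update_of_ne, hp, hp.symm, Function.update_comm hp]
  · cases a1 <;> cases a2 <;>
      simp [applyStep, Function.update_of_ne, hp, hp.symm, hm, hm.symm,
        Function.update_comm hp, Function.update_comm hm]

end

/-- Key indistinguishability step of the bivalent-to-bivalent lemma: if the enabled steps
`e1` of `p1` and `e2` of `p2` (distinct processes) are both reads or access different
registers, then `C1' = e2(e1(C))` and `C2' = e1(e2(C))` agree on `p1`'s local state and on
all register contents; this contradicts `C1'` being 0-valent and `C2'` being 1-valent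
when valency is determined by `p1`'s local state and the register contents. -/
theorem indistinguishability_contradiction {Proc Reg LState Val : Type*}
    [DecidableEq Proc] [DecidableEq Reg]
    (readUpd : Proc → LState → Val → LState)
    (writeVal : Proc → LState → Val) (writeUpd : Proc → LState → LState)
    (e1 e2 : MemStep Proc Reg) (C : (Proc → LState) × (Reg → Val))
    (hp : e1.p ≠ e2.p)
    (hcase : (e1.act = RWAction.R ∧ e2.act = RWAction.R) ∨ e1.m ≠ e2.m)
    -- valency as seen by `p1`'s solo run: a function of `p1`'s local state and registers
    (valency : LState → (Reg → Val) → Bool)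
    (h0 : valency ((applyStep readUpd writeVal writeUpd e2
            (applyStep readUpd writeVal writeUpd e1 C)).1 e1.p)
          (applyStep readUpd writeVal writeUpd e2
            (applyStep readUpd writeVal writeUpd e1 C)).2 = false)
    (h1 : valency ((applyStep readUpd writeVal writeUpd e1
            (applyStep readUpd writeVal writeUpd e2 C)).1 e1.p)
          (applyStep readUpd writeVal writeUpd e1
            (applyStep readUpd writeVal writeUpd e2 C)).2 = true) :
    ((applyStep readUpd writeVal writeUpd e2
        (applyStep readUpd writeVal writeUpd e1 C)).1 e1.p =
     (applyStep readUpd writeVal writeUpd e1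
        (applyStep readUpd writeVal writeUpd e2 C)).1 e1.p ∧
     (applyStep readUpd writeVal writeUpd e2
        (applyStep readUpd writeVal writeUpd e1 C)).2 =
     (applyStep readUpd writeVal writeUpd e1
        (applyStep readUpd writeVal writeUpd e2 C)).2) ∧ False := by
  have hcomm := applyStep_comm readUpd writeVal writeUpd hp hcase C
  rw [hcomm] at h0 ⊢
  exact ⟨⟨rfl, rfl⟩, Bool.false_ne_true (h0.symm.trans h1)⟩
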